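/- arXiv:2507.16648 — 4 statements merged into one kernel-verified Lean document; each statement's English description precedes it below -/
import Mathlib

section
/- Let M, N be positive integers with N even and MN > 1, and define v_{j,ℓ}, w_{j,ℓ} as before. Then for every j ∈ {0,…,N/2-2}, the slope of the segment from v_{j,1} to v_{j+1,0} equals the slope of the segment from w_{j,1} to w_{j+1,0}. -/
noncomputable def h (x : ℝ) : ℝ × ℝ := (x, x^2 - x)

noncomputable def segSlope (u v : ℝ × ℝ) : ℝ := (v.2 - u.2) / (v.1 - u.1)

noncomputable def vjl (M N j ℓ : ℕ) : ℝ × ℝ :=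
  h ((2 * (M : ℝ) * ((j : ℝ) + (ℓ : ℝ)) - (ℓ : ℝ)) / ((M : ℝ) * (N : ℝ) - 1))

noncomputable def wjl (M N j ℓ : ℕ) : ℝ × ℝ :=
  h (((M : ℝ) * (2 * (j : ℝ) + 1) - (1 - (ℓ : ℝ))) / ((M : ℝ) * (N : ℝ) - 1))

/-! A chord of the parabola `y = x² - x` has slope `a + b - 1`, which depends only on the sum
of the abscissae of its endpoints. Both segments have endpoint abscissae summing to
`(4M(j+1) - 1)/(MN - 1)`, and each has distinct endpoints since their abscissae differ by
`1/(MN - 1)` and `(2M - 1)/(MN - 1)` respectively. -/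

lemma segSlope_h {a b : ℝ} (hab : a ≠ b) : segSlope (h a) (h b) = a + b - 1 := by
  rw [segSlope, h, h, div_eq_iff (sub_ne_zero.mpr hab.symm)]
  ring

lemma segSlope_h_eq_of_add_eq {a b c d : ℝ} (hab : a ≠ b) (hcd : c ≠ d)
    (hsum : a + b = c + d) : segSlope (h a) (h b) = segSlope (h c) (h d) := by
  rw [segSlope_h hab, segSlope_h hcd, hsum]

theorem stmt2_general (M N : ℕ) (hM : 0 < M)
    (hMN : 1 < M * N) (j : ℕ) :
    segSlope (vjl M N j 1) (vjl M N (j + 1) 0) =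
      segSlope (wjl M N j 1) (wjl M N (j + 1) 0) := by
  have hD : (M : ℝ) * N - 1 ≠ 0 := sub_ne_zero.mpr (by exact_mod_cast hMN.ne')
  have hM1 : (1 : ℝ) ≤ M := by exact_mod_cast hM
  unfold vjl wjl
  apply segSlope_h_eq_of_add_eq
  · rw [Ne, div_left_inj' hD]
    push_cast
    linarith
  · rw [Ne, div_left_inj' hD]
    push_cast
    linarith
  · rw [← add_div, ← add_div]
    push_cast
    ring

theorem stmt2 (M N : ℕ) (hM : 0 < M) (hN : 0 < N) (hNeven : Even N)
    (hMN : 1 < M * N) (j : ℕ) (hj : j ≤ N / 2 - 2) :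
    segSlope (vjl M N j 1) (vjl M N (j + 1) 0) =
      segSlope (wjl M N j 1) (wjl M N (j + 1) 0) :=
  stmt2_general M N hM hMN j
end

section
/- Let M ≥ 2 be an integer, let f : ℝ² → ℝ be given by f(x₁,x₂) = x₁² - c·x₁ - x₂ with c = 1 - 3/(2M-2), and define vertices x^(t) = (t/(M-1), (1/(M-1))·(t²/(M-1) - t)) for t ∈ {0,…,M-1}. Then for every t ∈ {0,…,M-2} and every integer k with 0 ≤ t+k ≤ M-1, the direction x^(t+k) - x^(t) is strictly improving at x^(t) (i.e., ∇f(x^(t))ᵀ(x^(t+k) - x^(t)) > 0) if and only if k = 1. -/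
theorem stmt4 (M : ℤ) (hM : 2 ≤ M) (t k : ℤ)
    (ht0 : 0 ≤ t) (ht1 : t ≤ M - 2) (hk0 : 0 ≤ t + k) (hk1 : t + k ≤ M - 1)
    (X : ℤ → ℝ × ℝ)
    (hX : ∀ s : ℤ, X s =
      ((s : ℝ) / ((M : ℝ) - 1),
        (1 / ((M : ℝ) - 1)) * ((s : ℝ)^2 / ((M : ℝ) - 1) - (s : ℝ)))) :
    ((2 * (X t).1 + (3 / 2) / ((M : ℝ) - 1) - 1) * ((X (t + k)).1 - (X t).1)
      + (-1) * ((X (t + k)).2 - (X t).2) > 0) ↔ k = 1 := by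
  have hM' : (2 : ℝ) ≤ (M : ℝ) := by exact_mod_cast hM
  have hm : (0 : ℝ) < (M : ℝ) - 1 := by linarith
  have hm0 : ((M : ℝ) - 1) ≠ 0 := ne_of_gt hm
  have key : (2 * (X t).1 + (3 / 2) / ((M : ℝ) - 1) - 1) * ((X (t + k)).1 - (X t).1)
      + (-1) * ((X (t + k)).2 - (X t).2)
      = (k : ℝ) * (3 / 2 - (k : ℝ)) / ((M : ℝ) - 1) ^ 2 := by
    simp only [hX]
    push_cast
    field_simp
    ring
  rw [key]
  constructor
  · intro h
    by_contra hne
    have hk2 : k ≤ 0 ∨ 2 ≤ k := by omega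
    have hsq : (0 : ℝ) < ((M : ℝ) - 1) ^ 2 := by positivity
    have hnum : (0 : ℝ) < (k : ℝ) * (3 / 2 - (k : ℝ)) := by
      by_contra hn
      push_neg at hn
      have : (k : ℝ) * (3 / 2 - (k : ℝ)) / ((M : ℝ) - 1) ^ 2 ≤ 0 :=
        div_nonpos_of_nonpos_of_nonneg hn (le_of_lt hsq)
      linarith
    rcases hk2 with h1 | h1
    · have : (k : ℝ) ≤ 0 := by exact_mod_cast h1
      nlinarith
    · have : (2 : ℝ) ≤ (k : ℝ) := by exact_mod_cast h1
      nlinarith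
  · intro h
    subst h
    push_cast
    positivity
end

section
/- Let M_i ≥ 2 and M_{i+2} ≥ 2 be integers, ℓ ∈ {0,1}, j, s, t integers with s = (1-ℓ)(t - 2jM_i) + ℓ((2j+2)M_i - 1 - t). Define g(x) = x² - x, φ_v = (2M_i(j+ℓ) - ℓ)/(M_{i+2}-1), φ_w = (M_i(2j+1) - (1-ℓ))/(M_{i+2}-1). Then g(φ_v) + (s/(M_i-1))·(g(φ_w) - g(φ_v)) + ((M_i-1)/(M_{i+2}-1))²·g(s/(M_i-1)) = g(t/(M_{i+2}-1)). -/
noncomputable def g (x : ℝ) : ℝ := x^2 - x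

theorem stmt10 (Mi M2 j ℓ s t : ℤ) (hMi : 2 ≤ Mi) (hM2 : 2 ≤ M2)
    (hℓ : ℓ = 0 ∨ ℓ = 1)
    (hs : s = (1 - ℓ) * (t - 2 * j * Mi) + ℓ * ((2 * j + 2) * Mi - 1 - t)) :
    g ((2 * (Mi : ℝ) * ((j : ℝ) + (ℓ : ℝ)) - (ℓ : ℝ)) / ((M2 : ℝ) - 1))
      + ((s : ℝ) / ((Mi : ℝ) - 1)) *
        (g (((Mi : ℝ) * (2 * (j : ℝ) + 1) - (1 - (ℓ : ℝ))) / ((M2 : ℝ) - 1))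
          - g ((2 * (Mi : ℝ) * ((j : ℝ) + (ℓ : ℝ)) - (ℓ : ℝ)) / ((M2 : ℝ) - 1)))
      + (((Mi : ℝ) - 1) / ((M2 : ℝ) - 1))^2 * g ((s : ℝ) / ((Mi : ℝ) - 1))
      = g ((t : ℝ) / ((M2 : ℝ) - 1)) := by
  have hMi' : (Mi : ℝ) - 1 ≠ 0 := by
    have : (2 : ℝ) ≤ (Mi : ℝ) := by exact_mod_cast hMi
    linarith
  have hM2' : (M2 : ℝ) - 1 ≠ 0 := by
    have : (2 : ℝ) ≤ (M2 : ℝ) := by exact_mod_cast hM2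
    linarith
  subst hs
  rcases hℓ with h | h <;> subst h <;> simp only [g] <;> push_cast <;>
    field_simp <;> ring
end

section
/- For even integers N ≥ 4 and M ≥ 2 with MN > 1, the 2N numbers (2M(j+ℓ) - ℓ)/(MN-1) and (M(2j+1) - (1-ℓ))/(MN-1), for j ∈ {0,…,N/2-1}, ℓ ∈ {0,1}, are pairwise distinct and all lie in [0,1]. -/
lemma myDvdFalse (K A B r : ℕ) (hr : 0 < r) (hrK : r < K) (h : K * A = K * B + r) : False := by
  have h1 : K ∣ r := by
    have hrw : r = K * A - K * B := by omega
    rw [hrw]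
    exact Nat.dvd_sub (Dvd.intro A rfl) (Dvd.intro B rfl)
  have := Nat.le_of_dvd hr h1
  omega

lemma myCancel (K a b : ℕ) (hK : 0 < K) (h : K * a = K * b) : a = b :=
  Nat.eq_of_mul_eq_mul_left hK h

lemma keyA (M j1 l1 j2 l2 : ℕ) (hM : 2 ≤ M) (hl1 : l1 < 2) (hl2 : l2 < 2)
    (h : 2*M*j1 + l1*(2*M-1) = 2*M*j2 + l2*(2*M-1)) : j1 = j2 ∧ l1 = l2 := by
  interval_cases l1 <;> interval_cases l2
  · exact ⟨myCancel (2*M) _ _ (by omega) (by simpa using h), rfl⟩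
  · exact absurd (myDvdFalse (2*M) j1 j2 (2*M-1) (by omega) (by omega) (by simpa using h)) not_false
  · exact absurd (myDvdFalse (2*M) j2 j1 (2*M-1) (by omega) (by omega) (by simpa using h.symm)) not_false
  · exact ⟨myCancel (2*M) _ _ (by omega) (by simpa using h), rfl⟩

lemma keyB (M j1 l1 j2 l2 : ℕ) (hM : 2 ≤ M) (hl1 : l1 < 2) (hl2 : l2 < 2)
    (h : 2*M*j1 + (M-1) + l1 = 2*M*j2 + (M-1) + l2) : j1 = j2 ∧ l1 = l2 := by
  interval_cases l1 <;> interval_cases l2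
  · exact ⟨myCancel (2*M) _ _ (by omega) (by omega), rfl⟩
  · exact absurd (myDvdFalse (2*M) j1 j2 1 one_pos (by omega) (by omega)) not_false
  · exact absurd (myDvdFalse (2*M) j2 j1 1 one_pos (by omega) (by omega)) not_false
  · exact ⟨myCancel (2*M) _ _ (by omega) (by omega), rfl⟩

lemma keyAB (M j1 l1 j2 l2 : ℕ) (hM : 2 ≤ M) (hl1 : l1 < 2) (hl2 : l2 < 2)
    (h : 2*M*j1 + l1*(2*M-1) = 2*M*j2 + (M-1) + l2) : False := by
  interval_cases l1 <;> interval_cases l2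
  -- (0,0): 2Mj1 = 2Mj2 + M - 1 : M*(2*j1) = M*(2*j2) + (M-1)
  · exact myDvdFalse M (2*j1) (2*j2) (M-1) (by omega) (by omega)
      (by have h1 : M*(2*j1) = 2*M*j1 := by ring
          have h2 : M*(2*j2) = 2*M*j2 := by ring
          omega)
  -- (0,1): 2Mj1 = 2Mj2 + M : M*(2*j1) = M*(2*j2+1), cancel, parity
  · have := myCancel M (2*j1) (2*j2+1) (by omega)
      (by have h1 : M*(2*j1) = 2*M*j1 := by ring
          have h2 : M*(2*j2+1) = 2*M*j2 + M := by ring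
          omega)
    omega
  -- (1,0): 2Mj1 + 2M-1 = 2Mj2 + M-1 : M*(2*j1+2) = M*(2*j2+1)
  · have := myCancel M (2*j1+2) (2*j2+1) (by omega)
      (by have h1 : M*(2*j1+2) = 2*M*j1 + 2*M := by ring
          have h2 : M*(2*j2+1) = 2*M*j2 + M := by ring
          omega)
    omega
  -- (1,1): 2Mj1 + 2M-1 = 2Mj2 + M : M*(2*j1+2) = M*(2*j2+1) + 1
  · exact myDvdFalse M (2*j1+2) (2*j2+1) 1 one_pos (by omega)
      (by have h1 : M*(2*j1+2) = 2*M*j1 + 2*M := by ring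
          have h2 : M*(2*j2+1) = 2*M*j2 + M := by ring
          omega)

theorem stmt18 (M N : ℕ) (hNeven : Even N) (hN : 4 ≤ N)
    (hMeven : Even M) (hM : 2 ≤ M) (hMN : 1 < M * N)
    (a b : Fin (N / 2) × Fin 2 → ℝ)
    (ha : ∀ p, a p =
      (2 * (M : ℝ) * ((p.1.val : ℝ) + (p.2.val : ℝ)) - (p.2.val : ℝ)) /
        ((M : ℝ) * (N : ℝ) - 1))
    (hb : ∀ p, b p =
      ((M : ℝ) * (2 * (p.1.val : ℝ) + 1) - (1 - (p.2.val : ℝ))) /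
        ((M : ℝ) * (N : ℝ) - 1)) :
    Function.Injective (Sum.elim a b) ∧
      ∀ x, Sum.elim a b x ∈ Set.Icc (0 : ℝ) 1 := by
  have hMNnat : 2 ≤ M * N := hMN
  have hDpos : (0:ℝ) < (M:ℝ) * (N:ℝ) - 1 := by
    have : (2:ℝ) ≤ (M:ℝ) * (N:ℝ) := by exact_mod_cast hMNnat
    linarith
  have hD0 : (M:ℝ) * (N:ℝ) - 1 ≠ 0 := ne_of_gt hDpos
  have hsub1 : ((2*M - 1 : ℕ) : ℝ) = 2*(M:ℝ) - 1 := by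
    push_cast [Nat.cast_sub (show 1 ≤ 2*M by omega)]; ring
  have hsub2 : ((M - 1 : ℕ) : ℝ) = (M:ℝ) - 1 := by
    push_cast [Nat.cast_sub (show 1 ≤ M by omega)]; ring
  have hA : ∀ p : Fin (N/2) × Fin 2,
      a p = ((2*M*p.1.val + p.2.val*(2*M-1) : ℕ) : ℝ) / ((M:ℝ) * (N:ℝ) - 1) := by
    intro p
    rw [ha]
    congr 1
    push_cast [hsub1]
    ring
  have hB : ∀ p : Fin (N/2) × Fin 2,
      b p = ((2*M*p.1.val + (M-1) + p.2.val : ℕ) : ℝ) / ((M:ℝ) * (N:ℝ) - 1) := by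
    intro p
    rw [hb]
    congr 1
    push_cast [hsub2]
    ring
  constructor
  · rintro (p | p) (q | q) h
    · simp only [Sum.elim_inl] at h
      rw [hA p, hA q, div_eq_div_iff hD0 hD0] at h
      have hnum : 2*M*p.1.val + p.2.val*(2*M-1) = 2*M*q.1.val + q.2.val*(2*M-1) := by
        have := mul_right_cancel₀ hD0 h
        exact_mod_cast this
      obtain ⟨h1, h2⟩ := keyA M _ _ _ _ hM p.2.isLt q.2.isLt hnum
      simp only [Sum.inl.injEq]
      exact Prod.ext (Fin.ext h1) (Fin.ext h2)
    · simp only [Sum.elim_inl, Sum.elim_inr] at h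
      rw [hA p, hB q, div_eq_div_iff hD0 hD0] at h
      have hnum : 2*M*p.1.val + p.2.val*(2*M-1) = 2*M*q.1.val + (M-1) + q.2.val := by
        have := mul_right_cancel₀ hD0 h
        exact_mod_cast this
      exact absurd (keyAB M _ _ _ _ hM p.2.isLt q.2.isLt hnum) not_false
    · simp only [Sum.elim_inl, Sum.elim_inr] at h
      rw [hB p, hA q, div_eq_div_iff hD0 hD0] at h
      have hnum : 2*M*q.1.val + q.2.val*(2*M-1) = 2*M*p.1.val + (M-1) + p.2.val := by
        have := mul_right_cancel₀ hD0 h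
        exact_mod_cast this.symm
      exact absurd (keyAB M _ _ _ _ hM q.2.isLt p.2.isLt hnum) not_false
    · simp only [Sum.elim_inr] at h
      rw [hB p, hB q, div_eq_div_iff hD0 hD0] at h
      have hnum : 2*M*p.1.val + (M-1) + p.2.val = 2*M*q.1.val + (M-1) + q.2.val := by
        have := mul_right_cancel₀ hD0 h
        exact_mod_cast this
      obtain ⟨h1, h2⟩ := keyB M _ _ _ _ hM p.2.isLt q.2.isLt hnum
      simp only [Sum.inr.injEq]
      exact Prod.ext (Fin.ext h1) (Fin.ext h2)
  · have hhalf : 2 * (N / 2) = N := Nat.two_mul_div_two_of_even hNeven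
    have hbound : ∀ (j l : ℕ), j < N/2 → l < 2 →
        2*M*j + l*(2*M-1) ≤ M*N - 1 ∧ 2*M*j + (M-1) + l ≤ M*N - 1 := by
      intro j l hj hl
      have hj' : j + 1 ≤ N/2 := hj
      have h2 : 2*M*(N/2) = M*N := by
        rw [show 2*M*(N/2) = M*(2*(N/2)) by ring, hhalf]
      have h1 : 2*M*j + 2*M ≤ M*N := by
        calc 2*M*j + 2*M = 2*M*(j+1) := by ring
          _ ≤ 2*M*(N/2) := Nat.mul_le_mul_left _ hj'
          _ = M*N := h2
      have h6 : l*(2*M-1) ≤ 2*M-1 := by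
        calc l*(2*M-1) ≤ 1*(2*M-1) := Nat.mul_le_mul_right _ (by omega)
          _ = 2*M-1 := one_mul _
      constructor <;> omega
    rintro (p | p)
    · simp only [Sum.elim_inl]
      rw [hA p]
      constructor
      · positivity
      · rw [div_le_one hDpos]
        have := (hbound p.1.val p.2.val p.1.isLt p.2.isLt).1
        have h4 : (2*M*p.1.val + p.2.val*(2*M-1) : ℕ) + 1 ≤ M*N := by omega
        have h5 : ((2*M*p.1.val + p.2.val*(2*M-1) : ℕ) : ℝ) + 1 ≤ (M:ℝ)*(N:ℝ) := by
          exact_mod_cast h4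
        linarith
    · simp only [Sum.elim_inr]
      rw [hB p]
      constructor
      · positivity
      · rw [div_le_one hDpos]
        have := (hbound p.1.val p.2.val p.1.isLt p.2.isLt).2
        have h4 : (2*M*p.1.val + (M-1) + p.2.val : ℕ) + 1 ≤ M*N := by omega
        have h5 : ((2*M*p.1.val + (M-1) + p.2.val : ℕ) : ℝ) + 1 ≤ (M:ℝ)*(N:ℝ) := by
          exact_mod_cast h4
        linarith
end
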